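/- Let 0 < s < 1, h > 0, and let u : ℤ_h → ℝ satisfy Σ_{m∈ℤ} |u(mh)|/(1+|m|^{1+2s}) < ∞. Then for every j ∈ ℤ the two series Σ_{m∈ℤ, m≠j} (u(jh) − u(mh)) R^s_h(j−m) and Σ_{n∈ℤ} K^s_h(j−n) u(nh) converge absolutely and are equal: Σ_{m≠j} (u(jh)−u(mh)) R^s_h(j−m) = Σ_{n∈ℤ} K^s_h(j−n) u(nh). -/

import Mathlib

/-!
For `n ≠ 0` the reflection formula turns `K^s_h(n)` into `-R^s_h(n)`, so the second series is the
first one plus the diagonal term `K^s_h(0) u(jh)`, once we know that `Σ_m R^s_h(m) = K^s_h(0)`.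
With `A(x) = Γ(x - s) / Γ(x + s)` one has `R^s_h(k) = c (A(k) - A(k + 1))` for `k ≥ 1` and a
constant `c`, so this sum telescopes to `2 c A(1)`, which the duplication formula identifies with
`K^s_h(0)`. Absolute convergence comes from the decay `R^s_h(m) = O(|m|^(-1-2s))`, which follows
from Wendel's inequality `Γ(x + t) ≤ x^t Γ(x)`, i.e. from the log-convexity of `Γ`.
-/

/-- The kernel of the discrete fractional Laplacian on the mesh `ℤ_h`. -/
noncomputable def Ksh (s h : ℝ) (n : ℤ) : ℝ :=
  (-1 : ℝ) ^ n * Real.Gamma (2 * s + 1) /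
    (Real.Gamma (1 + s + (n : ℝ)) * Real.Gamma (1 + s - (n : ℝ)) * h ^ (2 * s))

/-- The kernel `R^s_h`, vanishing at `0`. -/
noncomputable def Rsh (s h : ℝ) (m : ℤ) : ℝ :=
  if m = 0 then 0
  else (4 : ℝ) ^ s * Real.Gamma (1 / 2 + s) * s / (Real.sqrt Real.pi * Real.Gamma (1 - s)) *
    (Real.Gamma (((|m| : ℤ) : ℝ) - s) / (h ^ (2 * s) * Real.Gamma (((|m| : ℤ) : ℝ) + 1 + s)))

open Real Filter Topology

theorem hasSum_sub_succ_of_antitone {f : ℕ → ℝ} (hf : Antitone f)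
    (hlim : Tendsto f atTop (𝓝 0)) : HasSum (fun n => f n - f (n + 1)) (f 0) := by
  rw [hasSum_iff_tendsto_nat_of_nonneg (fun n => sub_nonneg.2 (hf n.le_succ))]
  have hsum := (tendsto_const_nhds (x := f 0)).sub hlim
  rw [sub_zero] at hsum
  exact hsum.congr fun n => (Finset.sum_range_sub' f n).symm

theorem one_add_abs_rpow_le_mul_abs_sub_rpow {p x y : ℝ} (hp : 0 ≤ p) (hxy : 1 ≤ |x - y|) :
    1 + |y| ^ p ≤ (1 + (1 + |x|) ^ p) * |x - y| ^ p := by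
  have hy : |y| ≤ (1 + |x|) * |x - y| := by
    have := abs_sub_abs_le_abs_sub y x
    rw [abs_sub_comm] at this
    nlinarith [abs_nonneg x]
  have h1 : 1 ≤ |x - y| ^ p := one_le_rpow hxy hp
  have h2 : |y| ^ p ≤ (1 + |x|) ^ p * |x - y| ^ p := by
    rw [← mul_rpow (by positivity) (abs_nonneg _)]
    exact rpow_le_rpow (abs_nonneg _) hy hp
  linarith

theorem kernel_formulas_agree_of_hasSum {R K u : ℤ → ℝ} (j : ℤ) (hR0 : R 0 = 0)
    (hKR : ∀ n ≠ 0, K n = -R n) (hR : HasSum R (K 0))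
    (huR : Summable fun m => u m * R (j - m)) :
    (Summable fun m : {m : ℤ // m ≠ j} => |(u j - u m.1) * R (j - m.1)|) ∧
      (Summable fun n : ℤ => |K (j - n) * u n|) ∧
      (∑' m : {m : ℤ // m ≠ j}, (u j - u m.1) * R (j - m.1)) = ∑' n : ℤ, K (j - n) * u n := by
  have hRj : HasSum (fun m => R (j - m)) (K 0) := (Equiv.subLeft j).hasSum_iff.2 hR
  have hF : HasSum (fun m => (u j - u m) * R (j - m)) (u j * K 0 - ∑' m, u m * R (j - m)) := by
    simpa only [sub_mul] using (hRj.mul_left (u j)).sub huR.hasSum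
  have hK : (fun n => K (j - n) * u n) =
      fun n => (if n = j then K 0 * u j else 0) - u n * R (j - n) := by
    ext n
    rcases eq_or_ne n j with rfl | hnj
    · simp [hR0]
    · rw [if_neg hnj, hKR _ (sub_ne_zero.2 hnj.symm)]
      ring
  have hG : HasSum (fun n => K (j - n) * u n) (K 0 * u j - ∑' m, u m * R (j - m)) := by
    rw [hK]
    exact (hasSum_ite_eq j _).sub huR.hasSum
  have hsupp : Function.support (fun m => (u j - u m) * R (j - m)) ⊆ {m | m ≠ j} := by
    rintro m hm rfl
    simp [hR0] at hm
  have hFj : HasSum (fun m : {m : ℤ // m ≠ j} => (u j - u m.1) * R (j - m.1))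
      (u j * K 0 - ∑' m, u m * R (j - m)) :=
    (hasSum_subtype_iff_of_support_subset hsupp).2 hF
  refine ⟨summable_abs_iff.2 hFj.summable, summable_abs_iff.2 hG.summable, ?_⟩
  rw [hFj.tsum_eq, hG.tsum_eq]
  ring

namespace Real

theorem Gamma_add_le_rpow_mul_Gamma {x t : ℝ} (hx : 0 < x) (ht0 : 0 < t) (ht1 : t < 1) :
    Gamma (x + t) ≤ x ^ t * Gamma x := by
  have hconv := Gamma_mul_add_mul_le_rpow_Gamma_mul_rpow_Gamma hx (by linarith : 0 < x + 1)
    (sub_pos.2 ht1) ht0 (sub_add_cancel 1 t)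
  rwa [show (1 - t) * x + t * (x + 1) = x + t by ring, Gamma_add_one hx.ne',
    mul_rpow hx.le (Gamma_pos_of_pos hx).le, mul_left_comm, ← rpow_add (Gamma_pos_of_pos hx),
    sub_add_cancel, rpow_one] at hconv

theorem one_sub_mul_rpow_mul_Gamma_sub_le {s x : ℝ} (hs0 : 0 < s) (hs1 : s < 1) (hx : 1 ≤ x) :
    (1 - s) * x ^ (1 + 2 * s) * Gamma (x - s) ≤ Gamma (x + 1 + s) := by
  have hx0 : 0 < x := by linarith
  have hxs : 0 < x - s := by linarith
  have hxs' : 0 < x + s := by linarith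
  have hpow (y : ℝ) (hy : 0 < y) : y ^ (1 - s) * y ^ s = y := by
    rw [← rpow_add hy, sub_add_cancel, rpow_one]
  have hlow : (x - s) * Gamma (x - s) * x ^ s ≤ x * Gamma x := by
    have h := Gamma_add_le_rpow_mul_Gamma hx0 (sub_pos.2 hs1) (by linarith)
    rw [show x + (1 - s) = (x - s) + 1 by ring, Gamma_add_one hxs.ne'] at h
    calc (x - s) * Gamma (x - s) * x ^ s ≤ x ^ (1 - s) * Gamma x * x ^ s := by gcongr
      _ = x * Gamma x := by rw [mul_right_comm, hpow x hx0]
  have hupp : x * Gamma x * (x + s) ^ s ≤ Gamma (x + 1 + s) := by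
    have h := Gamma_add_le_rpow_mul_Gamma hxs' (sub_pos.2 hs1) (by linarith)
    rw [show x + s + (1 - s) = x + 1 by ring, Gamma_add_one hx0.ne'] at h
    calc x * Gamma x * (x + s) ^ s ≤ (x + s) ^ (1 - s) * Gamma (x + s) * (x + s) ^ s := by gcongr
      _ = Gamma (x + 1 + s) := by
        rw [mul_right_comm, hpow _ hxs', show x + 1 + s = (x + s) + 1 by ring,
          Gamma_add_one hxs'.ne']
  have hcoef : (1 - s) * x ^ (1 + 2 * s) ≤ (x - s) * x ^ s * (x + s) ^ s := by
    rw [rpow_add hx0, rpow_one, show 2 * s = s + s by ring, rpow_add hx0]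
    have : (1 - s) * x ≤ x - s := by nlinarith
    have : x ^ s ≤ (x + s) ^ s := by gcongr; linarith
    have : 0 ≤ x ^ s := by positivity
    calc (1 - s) * (x * (x ^ s * x ^ s)) = (1 - s) * x * x ^ s * x ^ s := by ring
      _ ≤ (x - s) * x ^ s * (x + s) ^ s := by gcongr
  calc (1 - s) * x ^ (1 + 2 * s) * Gamma (x - s)
      ≤ (x - s) * x ^ s * (x + s) ^ s * Gamma (x - s) := by
        gcongr
    _ = (x - s) * Gamma (x - s) * x ^ s * (x + s) ^ s := by ring
    _ ≤ x * Gamma x * (x + s) ^ s := by gcongr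
    _ ≤ Gamma (x + 1 + s) := hupp

theorem tendsto_Gamma_sub_div_Gamma_add {s : ℝ} (hs0 : 0 < s) (hs1 : s < 1) :
    Tendsto (fun x => Gamma (x - s) / Gamma (x + s)) atTop (𝓝 0) := by
  have hlim : Tendsto (fun x : ℝ => 2 / (1 - s) * x ^ (-(2 * s))) atTop (𝓝 0) := by
    simpa using (tendsto_rpow_neg_atTop (by linarith : 0 < 2 * s)).const_mul (2 / (1 - s))
  refine squeeze_zero' ?_ ?_ hlim
  · filter_upwards [eventually_ge_atTop s] with x hx
    exact div_nonneg (Gamma_nonneg_of_nonneg (by linarith)) (Gamma_nonneg_of_nonneg (by linarith))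
  · filter_upwards [eventually_ge_atTop 1] with x hx
    have hx0 : 0 < x := by linarith
    have hxs : 0 < x + s := by linarith
    have hbound := one_sub_mul_rpow_mul_Gamma_sub_le hs0 hs1 hx
    rw [show x + 1 + s = (x + s) + 1 by ring, Gamma_add_one hxs.ne',
      rpow_add hx0, rpow_one] at hbound
    have h1s : 0 < 1 - s := by linarith
    have hstep : x * ((1 - s) * x ^ (2 * s) * Gamma (x - s)) ≤ x * (2 * Gamma (x + s)) := by
      nlinarith [Gamma_pos_of_pos hxs]
    calc Gamma (x - s) / Gamma (x + s) ≤ 2 / ((1 - s) * x ^ (2 * s)) := by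
          rw [div_le_div_iff₀ (Gamma_pos_of_pos hxs) (by positivity)]
          linarith [le_of_mul_le_mul_left hstep hx0]
      _ = 2 / (1 - s) * x ^ (-(2 * s)) := by rw [rpow_neg hx0.le, ← div_eq_mul_inv, div_div]

theorem hasSum_Gamma_sub_div_Gamma_add_one_add {s : ℝ} (hs0 : 0 < s) (hs1 : s < 1) :
    HasSum (fun n : ℕ => Gamma (n + 1 - s) / Gamma (n + 1 + 1 + s))
      (Gamma (1 - s) / (2 * s * Gamma (1 + s))) := by
  set A : ℝ → ℝ := fun x => Gamma (x - s) / Gamma (x + s)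
  have hstep (n : ℕ) : A (n + 1) - A (n + 1 + 1) =
      2 * s * (Gamma (n + 1 - s) / Gamma (n + 1 + 1 + s)) := by
    have h1 : (0 : ℝ) < n + 1 - s := by linarith [n.cast_nonneg (α := ℝ)]
    have h2 : (0 : ℝ) < n + 1 + s := by linarith [n.cast_nonneg (α := ℝ)]
    simp only [A]
    rw [show (n : ℝ) + 1 + 1 - s = (n + 1 - s) + 1 by ring, Gamma_add_one h1.ne',
      show (n : ℝ) + 1 + 1 + s = (n + 1 + s) + 1 by ring, Gamma_add_one h2.ne']
    have := Gamma_pos_of_pos h1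
    have := Gamma_pos_of_pos h2
    field_simp
    ring
  have hanti : Antitone fun n : ℕ => A (n + 1) := by
    refine antitone_nat_of_succ_le fun n => sub_nonneg.1 ?_
    push_cast
    rw [hstep]
    have := Gamma_pos_of_pos (by linarith [n.cast_nonneg (α := ℝ)] : (0 : ℝ) < n + 1 - s)
    have := Gamma_pos_of_pos (by linarith [n.cast_nonneg (α := ℝ)] : (0 : ℝ) < n + 1 + 1 + s)
    positivity
  have hlim : Tendsto (fun n : ℕ => A (n + 1)) atTop (𝓝 0) :=
    (tendsto_Gamma_sub_div_Gamma_add hs0 hs1).comp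
      (tendsto_atTop_add_const_right _ 1 tendsto_natCast_atTop_atTop)
  have htel := (hasSum_sub_succ_of_antitone hanti hlim).div_const (2 * s)
  push_cast at htel
  have hval : A (0 + 1) / (2 * s) = Gamma (1 - s) / (2 * s * Gamma (1 + s)) := by
    simp only [A, zero_add, div_div, mul_comm]
  simpa only [hstep, hval, mul_div_cancel_left₀ _ (by positivity : 2 * s ≠ 0)] using htel

theorem Gamma_nat_sub_mul_Gamma_one_add_sub_nat (s : ℝ) (k : ℕ) :
    Gamma (k - s) * Gamma (1 + s - k) = -(-1) ^ k * (Gamma s * Gamma (1 - s)) := by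
  rw [show 1 + s - k = 1 - (k - s) by ring, Gamma_mul_Gamma_one_sub, Gamma_mul_Gamma_one_sub,
    show π * (k - s) = k * π - π * s by ring, sin_nat_mul_pi_sub]
  rcases neg_one_pow_eq_or ℝ k with h | h <;> rw [h] <;> ring

theorem four_rpow_mul_Gamma_add_half_mul_Gamma_add_one {s : ℝ} (hs : s ≠ 0) :
    (4 : ℝ) ^ s * Gamma (s + 1 / 2) * Gamma (s + 1) = √π * Gamma (2 * s + 1) := by
  have hdup := Gamma_mul_Gamma_add_half s
  have h42 : (4 : ℝ) ^ s * (2 : ℝ) ^ (1 - 2 * s) = 2 := by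
    rw [show (4 : ℝ) = 2 ^ (2 : ℝ) by norm_num, ← rpow_mul (by norm_num), ← rpow_add (by norm_num)]
    norm_num
  rw [Gamma_add_one hs, Gamma_add_one (mul_ne_zero two_ne_zero hs)]
  linear_combination (4 : ℝ) ^ s * s * hdup + s * Gamma (2 * s) * √π * h42

end Real

noncomputable def Csh (s h : ℝ) : ℝ :=
  Real.Gamma (2 * s + 1) / (Real.Gamma s * Real.Gamma (1 - s) * h ^ (2 * s))

section Kernels

variable {s h : ℝ}

theorem Csh_pos (hs0 : 0 < s) (hs1 : s < 1) (hh : 0 < h) : 0 < Csh s h := by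
  have := Gamma_pos_of_pos (by linarith : 0 < 2 * s + 1)
  have := Gamma_pos_of_pos hs0
  have := Gamma_pos_of_pos (sub_pos.2 hs1)
  unfold Csh
  positivity

theorem Rsh_zero : Rsh s h 0 = 0 := if_pos rfl

theorem Rsh_neg (m : ℤ) : Rsh s h (-m) = Rsh s h m := by
  simp only [Rsh, neg_eq_zero, abs_neg]

theorem Ksh_neg (n : ℤ) : Ksh s h (-n) = Ksh s h n := by
  simp only [Ksh, Int.cast_neg, zpow_neg, ← inv_zpow, inv_neg_one]
  ring_nf

theorem Rsh_of_ne_zero (hs0 : 0 < s) {m : ℤ} (hm : m ≠ 0) :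
    Rsh s h m = Csh s h * (Gamma (|(m : ℝ)| - s) / Gamma (|(m : ℝ)| + 1 + s)) := by
  have hconst := four_rpow_mul_Gamma_add_half_mul_Gamma_add_one hs0.ne'
  rw [Gamma_add_one hs0.ne'] at hconst
  have hc : (4 : ℝ) ^ s * Gamma (1 / 2 + s) * s / √π = Gamma (2 * s + 1) / Gamma s := by
    rw [div_eq_div_iff (sqrt_pos.2 pi_pos).ne' (Gamma_pos_of_pos hs0).ne', add_comm]
    linear_combination hconst
  simp only [Rsh, if_neg hm, Int.cast_abs, Csh]
  rw [← div_div, hc]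
  ring

theorem Ksh_natCast (hs1 : s < 1) {k : ℕ} (hk : 1 ≤ k) :
    Ksh s h k = -(Csh s h * (Gamma (k - s) / Gamma (k + 1 + s))) := by
  have hΓ : Gamma (k - s) ≠ 0 := (Gamma_pos_of_pos (by
    have : (1 : ℝ) ≤ k := by exact_mod_cast hk
    linarith)).ne'
  have hrefl := Gamma_nat_sub_mul_Gamma_one_add_sub_nat s k
  rw [mul_comm, ← eq_div_iff hΓ] at hrefl
  simp only [Ksh, Csh, Int.cast_natCast, zpow_natCast, hrefl, add_right_comm 1 s,
    add_comm 1 (k : ℝ)]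
  field_simp

theorem Ksh_eq_neg_Rsh (hs0 : 0 < s) (hs1 : s < 1) {n : ℤ} (hn : n ≠ 0) :
    Ksh s h n = -Rsh s h n := by
  have hnat {k : ℕ} (hk : k ≠ 0) : Ksh s h k = -Rsh s h k := by
    rw [Ksh_natCast hs1 (Nat.one_le_iff_ne_zero.2 hk), Rsh_of_ne_zero hs0 (by exact_mod_cast hk),
      Int.cast_natCast, Nat.abs_cast]
  rcases Int.eq_nat_or_neg n with ⟨k, rfl | rfl⟩
  · exact hnat (by rintro rfl; exact hn rfl)
  · rw [Ksh_neg, Rsh_neg]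
    exact hnat (by rintro rfl; exact hn rfl)

theorem Rsh_nonneg (hs0 : 0 < s) (hs1 : s < 1) (hh : 0 < h) (m : ℤ) : 0 ≤ Rsh s h m := by
  rcases eq_or_ne m 0 with rfl | hm
  · exact Rsh_zero.ge
  have h1 : (1 : ℝ) ≤ |(m : ℝ)| := by exact_mod_cast Int.one_le_abs hm
  rw [Rsh_of_ne_zero hs0 hm]
  have := Csh_pos hs0 hs1 hh
  have := Gamma_pos_of_pos (by linarith : 0 < |(m : ℝ)| - s)
  have := Gamma_pos_of_pos (by linarith : 0 < |(m : ℝ)| + 1 + s)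
  positivity

theorem Rsh_le (hs0 : 0 < s) (hs1 : s < 1) (hh : 0 < h) {m : ℤ} (hm : m ≠ 0) :
    Rsh s h m ≤ Csh s h / ((1 - s) * |(m : ℝ)| ^ (1 + 2 * s)) := by
  have h1 : (1 : ℝ) ≤ |(m : ℝ)| := by exact_mod_cast Int.one_le_abs hm
  have hs : 0 < 1 - s := sub_pos.2 hs1
  rw [Rsh_of_ne_zero hs0 hm, ← mul_one_div (Csh s h)]
  refine mul_le_mul_of_nonneg_left ?_ (Csh_pos hs0 hs1 hh).le
  rw [div_le_div_iff₀ (Gamma_pos_of_pos (by linarith)) (by positivity), one_mul, mul_comm]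
  exact one_sub_mul_rpow_mul_Gamma_sub_le hs0 hs1 h1

theorem hasSum_Rsh (hs0 : 0 < s) (hs1 : s < 1) (hh : 0 < h) : HasSum (Rsh s h) (Ksh s h 0) := by
  have hpos : HasSum (fun n : ℕ => Rsh s h (n + 1))
      (Csh s h * (Gamma (1 - s) / (2 * s * Gamma (1 + s)))) := by
    have hterm (n : ℕ) : Rsh s h (n + 1) =
        Csh s h * (Gamma (n + 1 - s) / Gamma (n + 1 + 1 + s)) := by
      rw [Rsh_of_ne_zero hs0 (by omega)]
      push_cast
      rw [abs_of_nonneg (by positivity)]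
    simpa only [hterm] using (hasSum_Gamma_sub_div_Gamma_add_one_add hs0 hs1).mul_left (Csh s h)
  have hneg : HasSum (fun n : ℕ => Rsh s h (-(n + 1)))
      (Csh s h * (Gamma (1 - s) / (2 * s * Gamma (1 + s)))) := by
    simpa only [Rsh_neg] using hpos
  convert hpos.of_add_one_of_neg_add_one hneg using 1
  have := Gamma_pos_of_pos hs0
  have := Gamma_pos_of_pos (sub_pos.2 hs1)
  have : 0 < h ^ (2 * s) := by positivity
  simp only [Ksh, Csh, Rsh_zero, Int.cast_zero, zpow_zero, add_zero, sub_zero,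
    add_comm 1 s, Gamma_add_one hs0.ne']
  field_simp
  ring

end Kernels

theorem summable_mul_Rsh {s h : ℝ} (hs0 : 0 < s) (hs1 : s < 1) (hh : 0 < h) {u : ℤ → ℝ}
    (hu : Summable fun m : ℤ => |u m| / (1 + |(m : ℝ)| ^ (1 + 2 * s))) (j : ℤ) :
    Summable fun m => u m * Rsh s h (j - m) := by
  set p := 1 + 2 * s
  set C := Csh s h / (1 - s) * (1 + (1 + |(j : ℝ)|) ^ p)
  refine (hu.mul_left C).of_norm_bounded fun m => ?_
  rw [Real.norm_eq_abs, abs_mul, abs_of_nonneg (Rsh_nonneg hs0 hs1 hh _)]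
  have hs : 0 < 1 - s := sub_pos.2 hs1
  have hC := Csh_pos hs0 hs1 hh
  rcases eq_or_ne m j with rfl | hmj
  · rw [sub_self, Rsh_zero, mul_zero]
    positivity
  have hjm : (1 : ℝ) ≤ |(j : ℝ) - m| := by exact_mod_cast Int.one_le_abs (sub_ne_zero.2 hmj.symm)
  have hpeetre := one_add_abs_rpow_le_mul_abs_sub_rpow (by positivity : 0 ≤ p) hjm
  have hR := Rsh_le hs0 hs1 hh (sub_ne_zero.2 hmj.symm)
  push_cast at hR
  have ht : 0 < |(j : ℝ) - m| ^ p := one_pos.trans_le (one_le_rpow hjm (by positivity))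
  calc |u m| * Rsh s h (j - m) ≤ |u m| * (Csh s h / ((1 - s) * |(j : ℝ) - m| ^ p)) := by gcongr
    _ = Csh s h / (1 - s) * |u m| * (1 / |(j : ℝ) - m| ^ p) := by
      field_simp
    _ ≤ Csh s h / (1 - s) * |u m| * ((1 + (1 + |(j : ℝ)|) ^ p) / (1 + |(m : ℝ)| ^ p)) := by
      refine mul_le_mul_of_nonneg_left ?_ (by positivity)
      rw [div_le_div_iff₀ ht (by positivity), one_mul]
      exact hpeetre
    _ = C * (|u m| / (1 + |(m : ℝ)| ^ p)) := by ring

/-- Here `u m` stands for `u(mh)`. -/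
theorem two_formulas_agree (s h : ℝ) (hs0 : 0 < s) (hs1 : s < 1) (hh : 0 < h)
    (u : ℤ → ℝ)
    (hu : Summable fun m : ℤ => |u m| / (1 + ((|m| : ℤ) : ℝ) ^ (1 + 2 * s))) :
    ∀ j : ℤ,
      (Summable fun m : {m : ℤ // m ≠ j} => |(u j - u m.1) * Rsh s h (j - m.1)|) ∧
      (Summable fun n : ℤ => |Ksh s h (j - n) * u n|) ∧
      (∑' m : {m : ℤ // m ≠ j}, (u j - u m.1) * Rsh s h (j - m.1)) =
        ∑' n : ℤ, Ksh s h (j - n) * u n := by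
  intro j
  simp only [Int.cast_abs] at hu
  exact kernel_formulas_agree_of_hasSum j Rsh_zero (fun n hn => Ksh_eq_neg_Rsh hs0 hs1 hn)
    (hasSum_Rsh hs0 hs1 hh) (summable_mul_Rsh hs0 hs1 hh hu j)
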